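/- arXiv:1802.04157 — 4 statements merged into one kernel-verified Lean document; each statement's English description precedes it below -/
import Mathlib

section
/- Let η = (η₁, η₂) ∈ ℝ² be nonzero and |η| = √(η₁²+η₂²). Suppose complex numbers h_{αβ} (0 ≤ α,β ≤ 2, symmetric h_{αβ}=h_{βα}), v, σ satisfy the system: (1) |η|h₀₀ - iη₁h₁₀ - iη₂h₂₀ - ½|η|(h₀₀+h₁₁+h₂₂) = 0; (2) |η|h₀₁ - iη₁h₁₁ - iη₂h₂₁ + ½iη₁(h₀₀+h₁₁+h₂₂) = 0; (3) |η|h₀₂ - iη₁h₁₂ - iη₂h₂₂ + ½iη₂(h₀₀+h₁₁+h₂₂) = 0; (4) -2v + h₁₁ = 0; (5) h₁₂ = 0; (6) -2v + h₂₂ = 0; (7) -½|η|(h₁₁+h₂₂) - iη₁h₁₀ - iη₂h₂₀ + 2|η|v = 0; (8) -|η|σ = 0. Then h_{αβ} = 0 for all α,β, v = 0, and σ = 0. -/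
/-!
On the symbol system, the equations for `h₁₁, h₂₂, h₁₂` and the last gauge equation force
`h₁₁ = h₂₂ = 2v`, `h₁₂ = 0` and `η · (h₀₁, h₀₂) = 0`, after which the first equation gives
`h₀₀ = 4v` and the other two say that `|η| (h₀₁, h₀₂) = -2iv η`. A vector orthogonal to `η` and
parallel to it vanishes because `|η|² = η₁² + η₂² ≠ 0`, so `v = 0` and everything else follows.
-/

open Complex

theorem eq_zero_of_orthogonal_of_parallel {K : Type*} [Field K] {η₁ η₂ N c a b v : K}
    (hN : N ≠ 0) (hc : c ≠ 0) (hNsq : N ^ 2 = η₁ ^ 2 + η₂ ^ 2)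
    (horth : η₁ * a + η₂ * b = 0) (ha : N * a + c * η₁ * v = 0) (hb : N * b + c * η₂ * v = 0) :
    a = 0 ∧ b = 0 ∧ v = 0 := by
  have hcNv : c * N ^ 2 * v = 0 := by
    linear_combination η₁ * ha + η₂ * hb - N * horth + c * v * hNsq
  have hv : v = 0 := by simpa [hc, hN] using hcNv
  subst hv
  exact ⟨by simpa [hN] using ha, by simpa [hN] using hb, rfl⟩

theorem stmt_0 (η1 η2 : ℝ) (hη : ¬(η1 = 0 ∧ η2 = 0))
    (N : ℝ) (hN : N = Real.sqrt (η1 ^ 2 + η2 ^ 2))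
    (h : Fin 3 → Fin 3 → ℂ) (v σ : ℂ)
    (hsym : ∀ a b, h a b = h b a)
    (e1 : (N : ℂ) * h 0 0 - I * (η1 : ℂ) * h 1 0 - I * (η2 : ℂ) * h 2 0
        - (1 / 2 : ℂ) * (N : ℂ) * (h 0 0 + h 1 1 + h 2 2) = 0)
    (e2 : (N : ℂ) * h 0 1 - I * (η1 : ℂ) * h 1 1 - I * (η2 : ℂ) * h 2 1
        + (1 / 2 : ℂ) * I * (η1 : ℂ) * (h 0 0 + h 1 1 + h 2 2) = 0)
    (e3 : (N : ℂ) * h 0 2 - I * (η1 : ℂ) * h 1 2 - I * (η2 : ℂ) * h 2 2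
        + (1 / 2 : ℂ) * I * (η2 : ℂ) * (h 0 0 + h 1 1 + h 2 2) = 0)
    (e4 : -2 * v + h 1 1 = 0)
    (e5 : h 1 2 = 0)
    (e6 : -2 * v + h 2 2 = 0)
    (e7 : -(1 / 2 : ℂ) * (N : ℂ) * (h 1 1 + h 2 2) - I * (η1 : ℂ) * h 1 0
        - I * (η2 : ℂ) * h 2 0 + 2 * (N : ℂ) * v = 0)
    (e8 : -(N : ℂ) * σ = 0) :
    (∀ a b, h a b = 0) ∧ v = 0 ∧ σ = 0 := by
  have hsq : 0 < η1 ^ 2 + η2 ^ 2 := by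
    rcases not_and_or.mp hη with _ | _ <;> positivity
  have hN0 : (N : ℂ) ≠ 0 := by
    rw [hN]; exact_mod_cast (Real.sqrt_pos.mpr hsq).ne'
  have hNsq : (N : ℂ) ^ 2 = (η1 : ℂ) ^ 2 + (η2 : ℂ) ^ 2 := by
    rw [hN]; exact_mod_cast Real.sq_sqrt hsq.le
  rw [hsym 1 0, hsym 2 0] at e1 e7
  rw [hsym 2 1, e5] at e2
  have horth : (η1 : ℂ) * h 0 1 + η2 * h 0 2 = 0 := by
    linear_combination I * (e7 + (N / 2 : ℂ) * (e4 + e6)) + (η1 * h 0 1 + η2 * h 0 2) * I_sq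
  have hNh00 : (N : ℂ) * (h 0 0 - 4 * v) = 0 := by
    linear_combination 2 * e1 - 2 * e7
  have h00 : h 0 0 = 4 * v := by simpa [hN0, sub_eq_zero] using hNh00
  obtain ⟨h01, h02, rfl⟩ := eq_zero_of_orthogonal_of_parallel (c := 2 * I) (v := v) hN0
    (by simp) hNsq horth
    (by linear_combination e2 - (I * η1 / 2) * (h00 - e4 + e6))
    (by linear_combination e3 + I * η1 * e5 - (I * η2 / 2) * (h00 + e4 - e6))
  replace h00 : h 0 0 = 0 := by simpa using h00
  have h11 : h 1 1 = 0 := by simpa using e4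
  have h22 : h 2 2 = 0 := by simpa using e6
  refine ⟨fun a b => ?_, rfl, by simpa [hN0] using e8⟩
  fin_cases a <;> fin_cases b <;> first | assumption | (rw [hsym]; assumption)
end

section
/- Let η = (η₁, η₂) ∈ ℝ² be nonzero. Suppose complex numbers h_{αβ} (0 ≤ α,β ≤ 2, symmetric), v, σ satisfy: (1) |η|h₀₀ - iη₁h₁₀ - iη₂h₂₀ = 0; (2) |η|h₀₁ - iη₁h₁₁ - iη₂h₂₁ = 0; (3) |η|h₀₂ - iη₁h₁₂ - iη₂h₂₂ = 0; (4) -2v + h₁₁ = 0; (5) h₁₂ = 0; (6) -2v + h₂₂ = 0; (7) -½|η|(h₁₁+h₂₂) - iη₁h₁₀ - iη₂h₂₀ + 2|η|v = 0; (8) -|η|σ = 0. Then all h_{αβ} = 0, v = 0, σ = 0. -/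
/-!
Multiply (7) by `|η|` and substitute the tangential equations (2)–(6): the terms
`-½|η|(h₁₁ + h₂₂)` and `2|η|v` cancel, and since `i² = -1` the two conormal terms leave
`2|η|² v = 0`. Once `v = 0` the tangential block vanishes, and each remaining equation
reads `|η| x = 0` for a normal component `x`.
-/

open Complex

lemma sqrt_sq_add_sq_pos {a b : ℝ} (h : ¬(a = 0 ∧ b = 0)) : 0 < √(a ^ 2 + b ^ 2) := by
  rw [not_and_or] at h
  apply Real.sqrt_pos.mpr
  rcases h with h | h <;> positivity

lemma eq_zero_of_mul_sub_I_mul_sub_I_mul_eq_zero {N η₁ η₂ x a b : ℂ} (hN : N ≠ 0)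
    (hx : N * x - I * η₁ * a - I * η₂ * b = 0) (ha : a = 0) (hb : b = 0) : x = 0 := by
  subst ha hb
  simpa [hN] using hx

lemma divergenceGauge_v_eq_zero {N η₁ η₂ a b h₁₁ h₁₂ h₂₂ v : ℂ} (hN : N ≠ 0)
    (hN2 : N ^ 2 = η₁ ^ 2 + η₂ ^ 2)
    (e2 : N * a - I * η₁ * h₁₁ - I * η₂ * h₁₂ = 0)
    (e3 : N * b - I * η₁ * h₁₂ - I * η₂ * h₂₂ = 0)
    (e4 : -2 * v + h₁₁ = 0) (e5 : h₁₂ = 0) (e6 : -2 * v + h₂₂ = 0)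
    (e7 : -(1 / 2 : ℂ) * N * (h₁₁ + h₂₂) - I * η₁ * a - I * η₂ * b + 2 * N * v = 0) :
    v = 0 := by
  have key : N ^ 2 * v = 0 := by
    linear_combination (1 / 2 : ℂ) * (N * e7 + I * η₁ * e2 + I * η₂ * e3
      + (η₁ ^ 2 * h₁₁ + 2 * η₁ * η₂ * h₁₂ + η₂ ^ 2 * h₂₂) * I_sq
      + (N ^ 2 / 2 - η₁ ^ 2) * e4 - 2 * η₁ * η₂ * e5 + (N ^ 2 / 2 - η₂ ^ 2) * e6
      + 2 * v * hN2)
  simpa [hN] using key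

theorem stmt_1 (η1 η2 : ℝ) (hη : ¬(η1 = 0 ∧ η2 = 0))
    (N : ℝ) (hN : N = Real.sqrt (η1 ^ 2 + η2 ^ 2))
    (h : Fin 3 → Fin 3 → ℂ) (v σ : ℂ)
    (hsym : ∀ a b, h a b = h b a)
    (e1 : (N : ℂ) * h 0 0 - I * (η1 : ℂ) * h 1 0 - I * (η2 : ℂ) * h 2 0 = 0)
    (e2 : (N : ℂ) * h 0 1 - I * (η1 : ℂ) * h 1 1 - I * (η2 : ℂ) * h 2 1 = 0)
    (e3 : (N : ℂ) * h 0 2 - I * (η1 : ℂ) * h 1 2 - I * (η2 : ℂ) * h 2 2 = 0)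
    (e4 : -2 * v + h 1 1 = 0)
    (e5 : h 1 2 = 0)
    (e6 : -2 * v + h 2 2 = 0)
    (e7 : -(1 / 2 : ℂ) * (N : ℂ) * (h 1 1 + h 2 2) - I * (η1 : ℂ) * h 1 0
        - I * (η2 : ℂ) * h 2 0 + 2 * (N : ℂ) * v = 0)
    (e8 : -(N : ℂ) * σ = 0) :
    (∀ a b, h a b = 0) ∧ v = 0 ∧ σ = 0 := by
  have hN0 : (N : ℂ) ≠ 0 := ofReal_ne_zero.mpr (hN ▸ (sqrt_sq_add_sq_pos hη).ne')
  have hN2 : (N : ℂ) ^ 2 = (η1 : ℂ) ^ 2 + (η2 : ℂ) ^ 2 := by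
    exact_mod_cast hN ▸ Real.sq_sqrt (by positivity)
  rw [hsym 1 0, hsym 2 0] at e1 e7
  rw [hsym 2 1] at e2
  have hv : v = 0 := divergenceGauge_v_eq_zero hN0 hN2 e2 e3 e4 e5 e6 e7
  have h11 : h 1 1 = 0 := by linear_combination e4 + 2 * hv
  have h22 : h 2 2 = 0 := by linear_combination e6 + 2 * hv
  have h01 := eq_zero_of_mul_sub_I_mul_sub_I_mul_eq_zero hN0 e2 h11 e5
  have h02 := eq_zero_of_mul_sub_I_mul_sub_I_mul_eq_zero hN0 e3 e5 h22
  have h00 := eq_zero_of_mul_sub_I_mul_sub_I_mul_eq_zero hN0 e1 h01 h02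
  refine ⟨fun a b => ?_, hv, by simpa [hN0] using e8⟩
  fin_cases a <;> fin_cases b <;> first | assumption | (rw [hsym]; assumption)
end

section
/- On a smooth Riemannian manifold (S,g), let u, φ be smooth functions and define the symmetric 2-tensor T = -2 du⊗du - 2 e^{-4u} dφ⊗dφ + (|du|² + e^{-4u}|dφ|²) g. Then the divergence of T satisfies δT = -2(Δ_g u) du - 8 e^{-4u} ⟨du, dφ⟩ dφ - 2 e^{-4u}(Δ_g φ) dφ + 4 e^{-4u} |dφ|² du, where δ = -tr∇ is the divergence operator on symmetric 2-tensors and Δ_g u = -tr D²u is the geometric Laplacian. Consequently, if Δ_g u - 2e^{-4u}|dφ|² = 0 and Δ_g φ + 4⟨du,dφ⟩ = 0, then δT = 0. -/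
/- STATEMENT 2: the matter stress tensor
T = -2 du⊗du - 2 e^{-4u} dφ⊗dφ + (|du|² + e^{-4u}|dφ|²) g
of the reduced stationary vacuum system is divergence-free on-shell
(proof of Lemma 2.4 of the paper), formalized in coordinates on flat ℝ³. -/

open Real

noncomputable section

abbrev E3 := EuclideanSpace ℝ (Fin 3)

/-- partial derivative in the i-th coordinate direction -/
def pd (f : E3 → ℝ) (i : Fin 3) (x : E3) : ℝ :=
  fderiv ℝ f x (EuclideanSpace.single i 1)

/-- geometric Laplacian Δ f = -tr D²f -/
def lap (f : E3 → ℝ) (x : E3) : ℝ := -∑ i, pd (pd f i) i x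

section Helpers

variable {f g : E3 → ℝ} {x : E3} {l : Fin 3}

lemma pd_congr (h : ∀ y, f y = g y) : pd f l x = pd g l x := by
  have : f = g := funext h
  rw [this]

lemma pd_contDiff (hf : ContDiff ℝ (⊤ : ℕ∞) f) (i : Fin 3) : ContDiff ℝ (⊤ : ℕ∞) (pd f i) :=
  (hf.fderiv_right (by simp)).clm_apply contDiff_const

lemma pd_diffAt (hf : ContDiff ℝ (⊤ : ℕ∞) f) (i : Fin 3) (x : E3) : DifferentiableAt ℝ (pd f i) x :=
  ((pd_contDiff hf i).differentiable (by simp)) x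

lemma pd_add (hf : DifferentiableAt ℝ f x) (hg : DifferentiableAt ℝ g x) :
    pd (fun y => f y + g y) l x = pd f l x + pd g l x := by
  simp [pd, fderiv_fun_add hf hg]

lemma pd_sub (hf : DifferentiableAt ℝ f x) (hg : DifferentiableAt ℝ g x) :
    pd (fun y => f y - g y) l x = pd f l x - pd g l x := by
  simp [pd, fderiv_fun_sub hf hg]

lemma pd_mul (hf : DifferentiableAt ℝ f x) (hg : DifferentiableAt ℝ g x) :
    pd (fun y => f y * g y) l x = pd f l x * g x + f x * pd g l x := by
  simp [pd, fderiv_fun_mul hf hg]; ring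

lemma pd_const_mul (hf : DifferentiableAt ℝ f x) (c : ℝ) :
    pd (fun y => c * f y) l x = c * pd f l x := by
  unfold pd; rw [fderiv_const_mul hf c]; simp

lemma pd_mul_const (hf : DifferentiableAt ℝ f x) (c : ℝ) :
    pd (fun y => f y * c) l x = pd f l x * c := by
  unfold pd; rw [fderiv_mul_const hf c]; simp [mul_comm]

lemma pd_exp (hf : DifferentiableAt ℝ f x) :
    pd (fun y => exp (f y)) l x = exp (f x) * pd f l x := by
  simp [pd, fderiv_exp hf]

lemma pd_sum {ι : Type*} {s : Finset ι} {F : ι → E3 → ℝ}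
    (hF : ∀ i ∈ s, DifferentiableAt ℝ (F i) x) :
    pd (fun y => ∑ i ∈ s, F i y) l x = ∑ i ∈ s, pd (F i) l x := by
  simp [pd, fderiv_fun_sum hF]

lemma pd_sq (hf : DifferentiableAt ℝ f x) :
    pd (fun y => f y ^ 2) l x = 2 * f x * pd f l x := by
  have h := pd_mul (l := l) hf hf
  calc pd (fun y => f y ^ 2) l x = pd (fun y => f y * f y) l x := by
        apply pd_congr; intro y; ring
    _ = 2 * f x * pd f l x := by rw [h]; ring

lemma pd_comm (hf : ContDiff ℝ (⊤ : ℕ∞) f) (a b : Fin 3) (x : E3) :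
    pd (pd f a) b x = pd (pd f b) a x := by
  have hd : DifferentiableAt ℝ (fderiv ℝ f) x :=
    ((hf.fderiv_right (m := (⊤ : ℕ∞)) (by simp)).differentiable (by simp)) x
  have key : ∀ a b : Fin 3, pd (pd f a) b x
      = fderiv ℝ (fderiv ℝ f) x (EuclideanSpace.single b 1) (EuclideanSpace.single a 1) := by
    intro a b
    show fderiv ℝ (fun y => fderiv ℝ f y (EuclideanSpace.single a 1)) x _ = _
    rw [fderiv_clm_apply hd (differentiableAt_const _)]
    simp
  have hsymm := (hf.contDiffAt (x := x)).isSymmSndFDerivAt (by rw [minSmoothness_of_isRCLikeNormedField]; exact WithTop.coe_le_coe.mpr (le_top : (2 : ℕ∞) ≤ ⊤))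
  rw [key, key, hsymm]

/-- The divergence computation for one entry of the stress tensor. -/
lemma pd_T (u φ : E3 → ℝ) (hu : ContDiff ℝ (⊤ : ℕ∞) u) (hφ : ContDiff ℝ (⊤ : ℕ∞) φ)
    (i j l : Fin 3) (c : ℝ) (x : E3) :
    pd (fun y => -2 * pd u i y * pd u j y - 2 * exp (-4 * u y) * pd φ i y * pd φ j y
      + ((∑ k, pd u k y ^ 2) + exp (-4 * u y) * ∑ k, pd φ k y ^ 2) * c) l x
    = -2 * (pd (pd u i) l x * pd u j x + pd u i x * pd (pd u j) l x)
      - 2 * (exp (-4 * u x) * (-4 * pd u l x) * (pd φ i x * pd φ j x)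
             + exp (-4 * u x) * (pd (pd φ i) l x * pd φ j x + pd φ i x * pd (pd φ j) l x))
      + ((∑ k, 2 * pd u k x * pd (pd u k) l x)
         + (exp (-4 * u x) * (-4 * pd u l x) * (∑ k, pd φ k x ^ 2)
            + exp (-4 * u x) * ∑ k, 2 * pd φ k x * pd (pd φ k) l x)) * c := by
  have hud : DifferentiableAt ℝ u x := (hu.differentiable (by simp)) x
  have hU : ∀ k : Fin 3, DifferentiableAt ℝ (pd u k) x := fun k => pd_diffAt hu k x
  have hΦ : ∀ k : Fin 3, DifferentiableAt ℝ (pd φ k) x := fun k => pd_diffAt hφ k x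
  have hm4u : DifferentiableAt ℝ (fun y => -4 * u y) x := hud.const_mul (-4)
  have hE : DifferentiableAt ℝ (fun y => exp (-4 * u y)) x := hm4u.exp
  have hA1 : DifferentiableAt ℝ (fun y => -2 * pd u i y) x := (hU i).const_mul (-2)
  have hA : DifferentiableAt ℝ (fun y => -2 * pd u i y * pd u j y) x := hA1.mul (hU j)
  have hB2 : DifferentiableAt ℝ (fun y => 2 * exp (-4 * u y)) x := hE.const_mul 2
  have hB1 : DifferentiableAt ℝ (fun y => 2 * exp (-4 * u y) * pd φ i y) x := hB2.mul (hΦ i)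
  have hB : DifferentiableAt ℝ (fun y => 2 * exp (-4 * u y) * pd φ i y * pd φ j y) x :=
    hB1.mul (hΦ j)
  have hSub : DifferentiableAt ℝ
      (fun y => -2 * pd u i y * pd u j y - 2 * exp (-4 * u y) * pd φ i y * pd φ j y) x :=
    hA.sub hB
  have hSu : DifferentiableAt ℝ (fun y => ∑ k, pd u k y ^ 2) x :=
    DifferentiableAt.fun_sum fun k _ => (hU k).pow 2
  have hSφ : DifferentiableAt ℝ (fun y => ∑ k, pd φ k y ^ 2) x :=
    DifferentiableAt.fun_sum fun k _ => (hΦ k).pow 2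
  have hESφ : DifferentiableAt ℝ (fun y => exp (-4 * u y) * ∑ k, pd φ k y ^ 2) x := hE.mul hSφ
  have hS : DifferentiableAt ℝ
      (fun y => (∑ k, pd u k y ^ 2) + exp (-4 * u y) * ∑ k, pd φ k y ^ 2) x := hSu.add hESφ
  have hSc : DifferentiableAt ℝ
      (fun y => ((∑ k, pd u k y ^ 2) + exp (-4 * u y) * ∑ k, pd φ k y ^ 2) * c) x :=
    hS.mul_const c
  have hsumu : ∀ k ∈ (Finset.univ : Finset (Fin 3)),
      DifferentiableAt ℝ (fun y => pd u k y ^ 2) x := fun k _ => (hU k).pow 2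
  have hsumφ : ∀ k ∈ (Finset.univ : Finset (Fin 3)),
      DifferentiableAt ℝ (fun y => pd φ k y ^ 2) x := fun k _ => (hΦ k).pow 2
  have hsqu : ∀ k : Fin 3, pd (fun y => pd u k y ^ 2) l x
      = 2 * pd u k x * pd (pd u k) l x := fun k => pd_sq (hU k)
  have hsqφ : ∀ k : Fin 3, pd (fun y => pd φ k y ^ 2) l x
      = 2 * pd φ k x * pd (pd φ k) l x := fun k => pd_sq (hΦ k)
  simp only [pd_add hSub hSc, pd_sub hA hB, pd_mul_const hS c, pd_add hSu hESφ,
    pd_mul hA1 (hU j), pd_const_mul (hU i), pd_mul hB1 (hΦ j), pd_mul hB2 (hΦ i),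
    pd_const_mul hE, pd_exp hm4u, pd_const_mul hud, pd_mul hE hSφ,
    pd_sum hsumu, pd_sum hsumφ, hsqu, hsqφ]
  ring

end Helpers

theorem stmt_2 (u φ : E3 → ℝ) (hu : ContDiff ℝ (⊤ : ℕ∞) u) (hφ : ContDiff ℝ (⊤ : ℕ∞) φ)
    (T : Fin 3 → Fin 3 → E3 → ℝ)
    (hT : ∀ i j x, T i j x =
      -2 * pd u i x * pd u j x - 2 * exp (-4 * u x) * pd φ i x * pd φ j x
      + ((∑ k, pd u k x ^ 2) + exp (-4 * u x) * ∑ k, pd φ k x ^ 2)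
        * (if i = j then 1 else 0)) :
    (∀ j x, (-∑ i, pd (T i j) i x) =
        -2 * lap u x * pd u j x
        - 8 * exp (-4 * u x) * (∑ k, pd u k x * pd φ k x) * pd φ j x
        - 2 * exp (-4 * u x) * lap φ x * pd φ j x
        + 4 * exp (-4 * u x) * (∑ k, pd φ k x ^ 2) * pd u j x) ∧
    ((∀ x, lap u x - 2 * exp (-4 * u x) * (∑ k, pd φ k x ^ 2) = 0) →
     (∀ x, lap φ x + 4 * (∑ k, pd u k x * pd φ k x) = 0) →
     ∀ j x, (-∑ i, pd (T i j) i x) = 0) := by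
  have main : ∀ j x, (-∑ i, pd (T i j) i x) =
      -2 * lap u x * pd u j x
      - 8 * exp (-4 * u x) * (∑ k, pd u k x * pd φ k x) * pd φ j x
      - 2 * exp (-4 * u x) * lap φ x * pd φ j x
      + 4 * exp (-4 * u x) * (∑ k, pd φ k x ^ 2) * pd u j x := by
    intro j x
    have hpd : ∀ i, pd (T i j) i x =
        -2 * (pd (pd u i) i x * pd u j x + pd u i x * pd (pd u j) i x)
        - 2 * (exp (-4 * u x) * (-4 * pd u i x) * (pd φ i x * pd φ j x)
               + exp (-4 * u x) * (pd (pd φ i) i x * pd φ j x + pd φ i x * pd (pd φ j) i x))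
        + ((∑ k, 2 * pd u k x * pd (pd u k) i x)
           + (exp (-4 * u x) * (-4 * pd u i x) * (∑ k, pd φ k x ^ 2)
              + exp (-4 * u x) * ∑ k, 2 * pd φ k x * pd (pd φ k) i x))
          * (if i = j then 1 else 0) := fun i =>
      (pd_congr (hT i j)).trans (pd_T u φ hu hφ i j i (if i = j then 1 else 0) x)
    have su := fun a b => pd_comm hu a b x
    have sφ := fun a b => pd_comm hφ a b x
    have step1 : ∑ i, pd (T i j) i x
        = (∑ i, (-2 * (pd (pd u i) i x * pd u j x + pd u i x * pd (pd u j) i x)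
            - 2 * (exp (-4 * u x) * (-4 * pd u i x) * (pd φ i x * pd φ j x)
                   + exp (-4 * u x) * (pd (pd φ i) i x * pd φ j x
                       + pd φ i x * pd (pd φ j) i x))))
          + ((∑ k, 2 * pd u k x * pd (pd u k) j x)
             + (exp (-4 * u x) * (-4 * pd u j x) * (∑ k, pd φ k x ^ 2)
                + exp (-4 * u x) * ∑ k, 2 * pd φ k x * pd (pd φ k) j x)) := by
      rw [Finset.sum_congr rfl (fun i _ => hpd i), Finset.sum_add_distrib]
      congr 1
      simp [mul_ite, mul_one, mul_zero, Finset.sum_ite_eq']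
    rw [step1]
    simp only [lap, Fin.sum_univ_three, su j 0, su j 1, su j 2, sφ j 0, sφ j 1, sφ j 2]
    ring
  refine ⟨main, fun h1 h2 j x => ?_⟩
  rw [main j x]
  linear_combination (-2 * pd u j x) * h1 x + (-2 * exp (-4 * u x) * pd φ j x) * h2 x

end
end

section
/- Let (S, g̃) be an asymptotically flat Riemannian 3-manifold diffeomorphic to ℝ³ minus a ball, with g̃ ∈ Met^{m,α}_δ and ½ < δ < 1. Let Z be a C¹ vector field on S such that the symmetric tensor δ*Z (with components ½(∇_i Z_j + ∇_j Z_i)) decays at rate r^{-δ}. Then along large coordinate spheres S_r with outward unit normal N_r (extended so that ∇_{N_r}N_r = 0): (a) N_r[g̃(Z, N_r)] = δ*Z(N_r, N_r), so the radial component g̃(Z,N_r) grows no faster than r^{1-δ}; (b) the tangential part Z^T = Z - g̃(Z,N_r)N_r satisfies N_r(|Z^T|) - |Z^T| A(Z^T/|Z^T|, Z^T/|Z^T|) = 2δ*Z(N_r, Z^T/|Z^T|) - (Z^T/|Z^T|)[g̃(Z,N_r)] wherever Z^T ≠ 0, where A is the second fundamental form of S_r; consequently |Z| grows no faster than r^{2-δ}.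 -/
/- STATEMENT 10 (§5.5 of the paper): blow-up rate of a vector field Z whose
Killing derivative δ*Z decays at rate r^{-δ}, formalized on flat ℝ³.
Nr is the outward unit radial field (so ∇_{Nr}Nr = 0 and the second fundamental
form of the sphere of radius r is (1/r)·(induced metric)); dsZ is δ*Z as a
bilinear form.  (a) is the radial derivative identity for the radial component,
(b) the identity for the tangential part Z^T, and the consequence is the
growth bound |Z| ≲ r^{2-δ}. -/

open Real
open scoped RealInnerProductSpace

noncomputable section

/-- outward unit radial vector field -/
def Nr (x : E3) : E3 := ‖x‖⁻¹ • x

/-- the symmetrized derivative δ*Z as a bilinear form -/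
def dsZ (Z : E3 → E3) (x v w : E3) : ℝ :=
  (⟪fderiv ℝ Z x v, w⟫ + ⟪fderiv ℝ Z x w, v⟫) / 2

lemma hasFDerivAt_norm3 {x : E3} (hx : x ≠ 0) :
    HasFDerivAt (fun y : E3 => ‖y‖) (innerSL ℝ (‖x‖⁻¹ • x)) x := by
  have hx0 : (0:ℝ) < ‖x‖ := norm_pos_iff.2 hx
  have h2 : HasFDerivAt (fun y : E3 => ‖y‖^2) (2 • (innerSL ℝ x)) x :=
    (hasStrictFDerivAt_norm_sq x).hasFDerivAt
  have hs : HasDerivAt Real.sqrt (1 / (2 * Real.sqrt (‖x‖^2))) (‖x‖^2) :=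
    Real.hasDerivAt_sqrt (by positivity)
  have hcomp := hs.comp_hasFDerivAt x h2
  have heq : (fun y : E3 => Real.sqrt (‖y‖^2)) = fun y : E3 => ‖y‖ := by
    funext y; rw [Real.sqrt_sq (norm_nonneg y)]
  rw [Function.comp_def, heq] at hcomp
  refine hcomp.congr_fderiv ?_
  ext v
  simp [Real.sqrt_sq hx0.le, inner_smul_left, real_inner_smul_left]
  field_simp

lemma hasFDerivAt_Nr {x : E3} (hx : x ≠ 0) :
    HasFDerivAt Nr ((‖x‖⁻¹ • ContinuousLinearMap.id ℝ E3) +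
      (((-(‖x‖^2)⁻¹) • innerSL ℝ (‖x‖⁻¹ • x)).smulRight x)) x := by
  have hx0 : (0:ℝ) < ‖x‖ := norm_pos_iff.2 hx
  have hinv : HasFDerivAt (fun y : E3 => (‖y‖)⁻¹)
      ((-(‖x‖^2)⁻¹) • innerSL ℝ (‖x‖⁻¹ • x)) x := by
    exact (hasDerivAt_inv hx0.ne').comp_hasFDerivAt x (hasFDerivAt_norm3 hx)
  exact hinv.smul (hasFDerivAt_id x)

lemma fderiv_Nr_apply {x : E3} (hx : x ≠ 0) (v : E3) :
    fderiv ℝ Nr x v = ‖x‖⁻¹ • v - ((‖x‖^3)⁻¹ * ⟪x, v⟫) • x := by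
  rw [(hasFDerivAt_Nr hx).fderiv]
  have hx0 : (0:ℝ) < ‖x‖ := norm_pos_iff.2 hx
  simp [real_inner_smul_left, smul_smul, sub_eq_add_neg]
  congr 2
  field_simp

lemma norm_Nr {x : E3} (hx : x ≠ 0) : ‖Nr x‖ = 1 := by
  have hx0 : (0:ℝ) < ‖x‖ := norm_pos_iff.2 hx
  rw [Nr, norm_smul, norm_inv, norm_norm]
  field_simp

lemma inner_Nr_self {x : E3} (hx : x ≠ 0) : ⟪Nr x, Nr x⟫ = 1 := by
  rw [real_inner_self_eq_norm_sq, norm_Nr hx]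
  norm_num

lemma inner_x_Nr {x : E3} (hx : x ≠ 0) : ⟪x, Nr x⟫ = ‖x‖ := by
  have hx0 : (0:ℝ) < ‖x‖ := norm_pos_iff.2 hx
  simp only [Nr, real_inner_smul_right, real_inner_self_eq_norm_sq]
  field_simp

lemma fderiv_Nr_Nr {x : E3} (hx : x ≠ 0) : fderiv ℝ Nr x (Nr x) = 0 := by
  have hx0 : (0:ℝ) < ‖x‖ := norm_pos_iff.2 hx
  rw [fderiv_Nr_apply hx, inner_x_Nr hx]
  rw [show (Nr x) = ‖x‖⁻¹ • x from rfl, smul_smul]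
  rw [sub_eq_zero]
  congr 1
  field_simp

lemma part_a {Z : E3 → E3} (hZ : ContDiff ℝ 1 Z) {x : E3} (hx : x ≠ 0) :
    fderiv ℝ (fun y => ⟪Z y, Nr y⟫) x (Nr x) = dsZ Z x (Nr x) (Nr x) := by
  have hZd : DifferentiableAt ℝ Z x := (hZ.differentiable one_ne_zero).differentiableAt
  have hNrd : DifferentiableAt ℝ Nr x := (hasFDerivAt_Nr hx).differentiableAt
  rw [fderiv_inner_apply ℝ hZd hNrd, fderiv_Nr_Nr hx]
  simp [dsZ]

lemma part_b {Z : E3 → E3} (hZ : ContDiff ℝ 1 Z) {x : E3} (hr : 2 ≤ ‖x‖)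
    (ZT : E3) (hZT : ZT = Z x - ⟪Z x, Nr x⟫ • Nr x) (hZT0 : ZT ≠ 0) :
    fderiv ℝ (fun y => ‖Z y - ⟪Z y, Nr y⟫ • Nr y‖) x (Nr x) - ‖ZT‖ * (1 / ‖x‖)
      = 2 * dsZ Z x (Nr x) (‖ZT‖⁻¹ • ZT)
        - fderiv ℝ (fun y => ⟪Z y, Nr y⟫) x (‖ZT‖⁻¹ • ZT) := by
  have hx : x ≠ 0 := by intro h; rw [h] at hr; simp at hr; linarith
  have hx0 : (0:ℝ) < ‖x‖ := norm_pos_iff.2 hx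
  have hZd : DifferentiableAt ℝ Z x := (hZ.differentiable one_ne_zero).differentiableAt
  have hNrd : DifferentiableAt ℝ Nr x := (hasFDerivAt_Nr hx).differentiableAt
  have hgd : DifferentiableAt ℝ (fun y => ⟪Z y, Nr y⟫) x := hZd.inner ℝ hNrd
  set g := fun y : E3 => ⟪Z y, Nr y⟫ with hgdef
  set W := fun y : E3 => Z y - g y • Nr y with hWdef
  have hWd : DifferentiableAt ℝ W x := hZd.sub (hgd.smul hNrd)
  have hWx : W x = ZT := by rw [hZT]
  -- fderiv of W applied to v
  have hfW : ∀ v : E3, fderiv ℝ W x v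
      = fderiv ℝ Z x v - ((fderiv ℝ g x v) • Nr x + g x • fderiv ℝ Nr x v) := by
    intro v
    rw [hWdef]
    rw [fderiv_fun_sub (g := fun y => g y • Nr y) hZd (hgd.smul hNrd), fderiv_fun_smul hgd hNrd]
    simp
    abel
  -- inner products with ZT
  have hNZT : ⟪Nr x, ZT⟫ = 0 := by
    rw [hZT, inner_sub_right, real_inner_smul_right, inner_Nr_self hx,
      real_inner_comm]
    ring
  have hxZT : ⟪x, ZT⟫ = 0 := by
    have : ⟪x, ZT⟫ = ‖x‖ * ⟪Nr x, ZT⟫ := by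
      rw [show (Nr x) = ‖x‖⁻¹ • x from rfl, real_inner_smul_left]
      field_simp
    rw [this, hNZT, mul_zero]
  have hZxZT : ⟪Z x, ZT⟫ = ‖ZT‖ ^ 2 := by
    have : Z x = ZT + g x • Nr x := by rw [hZT]; abel
    rw [this, inner_add_left, real_inner_smul_left, hNZT,
      real_inner_self_eq_norm_sq]
    ring
  -- the norm function derivative
  have hq : HasFDerivAt (fun y => ‖W y‖) ((2 * Real.sqrt (⟪W x, W x⟫))⁻¹ •
      (fderiv ℝ (fun y => ⟪W y, W y⟫) x)) x := by
    have hqd : DifferentiableAt ℝ (fun y => ⟪W y, W y⟫) x := hWd.inner ℝ hWd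
    have hqpos : (0:ℝ) < ⟪W x, W x⟫ := by
      rw [hWx, real_inner_self_eq_norm_sq]
      exact pow_pos (norm_pos_iff.2 hZT0) 2
    have hs : HasDerivAt Real.sqrt (1 / (2 * Real.sqrt (⟪W x, W x⟫))) (⟪W x, W x⟫) :=
      Real.hasDerivAt_sqrt hqpos.ne'
    have hcomp := hs.comp_hasFDerivAt x hqd.hasFDerivAt
    have heq : (Real.sqrt ∘ fun y => ⟪W y, W y⟫) = fun y => ‖W y‖ := by
      funext y
      rw [Function.comp_apply, real_inner_self_eq_norm_sq,
        Real.sqrt_sq (norm_nonneg _)]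
    rw [heq] at hcomp
    rw [one_div] at hcomp
    exact hcomp
  have hfnorm : ∀ v : E3, fderiv ℝ (fun y => ‖W y‖) x v
      = ‖ZT‖⁻¹ * ⟪fderiv ℝ W x v, ZT⟫ := by
    intro v
    rw [hq.fderiv]
    have h1 : fderiv ℝ (fun y => ⟪W y, W y⟫) x v = 2 * ⟪fderiv ℝ W x v, ZT⟫ := by
      rw [fderiv_inner_apply ℝ hWd hWd, hWx, real_inner_comm ZT (fderiv ℝ W x v)]
      ring
    simp only [ContinuousLinearMap.coe_smul', Pi.smul_apply, smul_eq_mul, h1]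
    rw [hWx, real_inner_self_eq_norm_sq, Real.sqrt_sq (norm_nonneg _)]
    have : ‖ZT‖ ≠ 0 := norm_ne_zero_iff.2 hZT0
    field_simp
  -- compute LHS
  have hgN : fderiv ℝ g x (Nr x) = ⟪fderiv ℝ Z x (Nr x), Nr x⟫ := by
    rw [hgdef]
    rw [fderiv_inner_apply ℝ hZd hNrd, fderiv_Nr_Nr hx]
    simp
  have hLHS : fderiv ℝ (fun y => ‖W y‖) x (Nr x)
      = ⟪fderiv ℝ Z x (Nr x), ‖ZT‖⁻¹ • ZT⟫ := by
    rw [hfnorm, hfW, hgN]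
    rw [inner_sub_left, inner_add_left, real_inner_smul_left, real_inner_smul_left,
      fderiv_Nr_Nr hx, hNZT, real_inner_smul_right]
    simp
  -- compute fderiv g x u
  set u := ‖ZT‖⁻¹ • ZT with hu
  have hxu : ⟪x, u⟫ = 0 := by rw [hu, real_inner_smul_right, hxZT]; ring
  have hNru : fderiv ℝ Nr x u = ‖x‖⁻¹ • u := by
    rw [fderiv_Nr_apply hx, hxu]
    simp
  have hZxu : ⟪Z x, u⟫ = ‖ZT‖ := by
    have hZTn : ‖ZT‖ ≠ 0 := norm_ne_zero_iff.2 hZT0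
    rw [hu, real_inner_smul_right, hZxZT]
    field_simp
  have hgu : fderiv ℝ g x u = ‖x‖⁻¹ * ‖ZT‖ + ⟪fderiv ℝ Z x u, Nr x⟫ := by
    rw [hgdef, fderiv_inner_apply ℝ hZd hNrd, hNru, real_inner_smul_right, hZxu]
  -- put together
  rw [show (fun y => ‖Z y - ⟪Z y, Nr y⟫ • Nr y‖) = (fun y => ‖W y‖) from rfl]
  rw [hLHS, hgu, dsZ]
  ring

section PartC

variable {Z : E3 → E3} {δ C₀ : ℝ}

/-- monotonicity of t ↦ t^(-δ) -/
lemma rp_mono (hδ : 0 < δ) {a b : ℝ} (ha : 0 < a) (hab : a ≤ b) :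
    b ^ (-δ) ≤ a ^ (-δ) :=
  Real.antitoneOn_rpow_Ioi_of_exponent_nonpos (by linarith)
    (Set.mem_Ioi.2 ha) (Set.mem_Ioi.2 (lt_of_lt_of_le ha hab)) hab

lemma rp_half (hδ0 : 0 < δ) (hδ1 : δ < 1) {t : ℝ} (ht : 0 < t) :
    (t / 2) ^ (-δ) ≤ 2 * t ^ (-δ) := by
  rw [Real.div_rpow ht.le (by norm_num)]
  rw [div_le_iff₀ (Real.rpow_pos_of_pos (by norm_num) _)]
  have h1 : ((2:ℝ)) ^ (-δ) * (2:ℝ) ^ (δ:ℝ) = 1 := by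
    rw [← Real.rpow_add (by norm_num)]
    simp
  have h2 : (2:ℝ) ^ (δ:ℝ) ≤ 2 := by
    calc (2:ℝ) ^ (δ:ℝ) ≤ (2:ℝ) ^ (1:ℝ) :=
      Real.rpow_le_rpow_of_exponent_le one_le_two hδ1.le
    _ = 2 := Real.rpow_one 2
  calc t ^ (-δ) = 2 * t ^ (-δ) * ((2:ℝ) ^ (-δ) * (2:ℝ) ^ (δ:ℝ)) / 2 := by
        rw [h1]; ring
    _ ≤ 2 * t ^ (-δ) * ((2:ℝ) ^ (-δ) * 2) / 2 := by
        have hp : (0:ℝ) ≤ 2 * t ^ (-δ) * (2:ℝ) ^ (-δ) / 2 := by positivity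
        nlinarith [Real.rpow_nonneg (le_of_lt ht) (-δ),
          Real.rpow_nonneg (by norm_num : (0:ℝ) ≤ 2) (-δ), h2]
    _ = 2 * t ^ (-δ) * (2:ℝ) ^ (-δ) := by ring

/-- concavity step: (1-δ) * (a+1)^(-δ) ≤ (a+1)^(1-δ) - a^(1-δ) -/
lemma concave_step (hδ0 : 0 < δ) (hδ1 : δ < 1) {a : ℝ} (ha : 0 ≤ a) :
    (1 - δ) * (a + 1) ^ (-δ) ≤ (a + 1) ^ (1 - δ) - a ^ (1 - δ) := by
  rcases eq_or_lt_of_le ha with h0 | ha0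
  · rw [← h0]
    rw [Real.zero_rpow (by linarith : (1:ℝ) - δ ≠ 0)]
    rw [zero_add, Real.one_rpow, Real.one_rpow]
    linarith
  · have ha1 : (0:ℝ) < a + 1 := by linarith
    set x := a / (a + 1) with hx
    have hx0 : 0 ≤ x := by positivity
    have hamg : x ^ (1 - δ) * 1 ^ (δ:ℝ) ≤ (1-δ) * x + δ * 1 :=
      Real.geom_mean_le_arith_mean2_weighted (by linarith) hδ0.le hx0
        (by norm_num) (by ring)
    rw [Real.one_rpow, mul_one] at hamg
    have hxp : a ^ (1-δ) = (a+1) ^ (1-δ) * x ^ (1-δ) := by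
      rw [hx, Real.div_rpow ha ha1.le]
      field_simp
    have hfinal : (a+1) ^ (1-δ) * ((1-δ) * x + δ) =
        (a+1) ^ (1-δ) - (1-δ) * (a+1) ^ (-δ) := by
      have h2 : (a+1) ^ (1-δ) * (1 - x) = (a+1) ^ (-δ) := by
        have : 1 - x = (a+1)⁻¹ := by
          rw [hx]; field_simp; ring
        rw [this]
        rw [← Real.rpow_neg_one (a+1), ← Real.rpow_add ha1]
        norm_num
        congr 1
        ring
      nlinarith [h2]
    have h3 : (a+1) ^ (1-δ) * x ^ (1-δ) ≤ (a+1) ^ (1-δ) * ((1-δ) * x + δ) := by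
      have := mul_le_mul_of_nonneg_left hamg (Real.rpow_nonneg ha1.le (1-δ))
      calc (a+1) ^ (1-δ) * x ^ (1-δ) ≤ (a+1) ^ (1-δ) * ((1-δ) * x + δ * 1) := this
        _ = (a+1) ^ (1-δ) * ((1-δ) * x + δ) := by ring
    rw [hxp]
    linarith [hfinal, h3]

/-- sum bound: ∑_{k<n} (k+1)^(-δ) ≤ n^(1-δ)/(1-δ) -/
lemma sum_rpow_bound (hδ0 : 0 < δ) (hδ1 : δ < 1) (n : ℕ) :
    ∑ k ∈ Finset.range n, ((k : ℝ) + 1) ^ (-δ) ≤ (n : ℝ) ^ (1 - δ) / (1 - δ) := by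
  induction n with
  | zero =>
    simp only [Finset.range_zero, Finset.sum_empty, Nat.cast_zero]
    rw [Real.zero_rpow (by linarith : (1:ℝ) - δ ≠ 0)]
    norm_num
  | succ n ih =>
    rw [Finset.sum_range_succ]
    have hstep := concave_step hδ0 hδ1 (by positivity : (0:ℝ) ≤ (n:ℝ))
    have h1δ : (0:ℝ) < 1 - δ := by linarith
    have : ((n:ℝ) + 1) ^ (-δ) ≤ (((n:ℝ)+1) ^ (1-δ) - (n:ℝ) ^ (1-δ)) / (1-δ) := by
      rw [le_div_iff₀ h1δ]
      linarith
    push_cast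
    calc (∑ k ∈ Finset.range n, ((k : ℝ) + 1) ^ (-δ)) + ((n:ℝ) + 1) ^ (-δ)
        ≤ (n : ℝ) ^ (1 - δ) / (1 - δ) + (((n:ℝ)+1) ^ (1-δ) - (n:ℝ) ^ (1-δ)) / (1-δ) := by
          exact add_le_add ih this
      _ = ((n:ℝ) + 1) ^ (1-δ) / (1-δ) := by ring

end PartC
-- continuation: segment bound
section PartC2

variable {Z : E3 → E3} {δ C₀ : ℝ}

/-- the difference of Z along a segment, paired with the direction -/
lemma seg_bound (hZ : ContDiff ℝ 1 Z) (hδ0 : 0 < δ) (hC0 : 0 ≤ C₀)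
    (hC : ∀ x : E3, 2 ≤ ‖x‖ → ∀ v w : E3, |dsZ Z x v w| ≤ C₀ * ‖x‖ ^ (-δ) * ‖v‖ * ‖w‖)
    (a u : E3) (m : ℝ) (hm : 2 ≤ m)
    (hseg : ∀ t ∈ Set.Icc (0:ℝ) 1, m ≤ ‖a + t • u‖) :
    |⟪Z (a + u) - Z a, u⟫| ≤ C₀ * m ^ (-δ) * (‖u‖ * ‖u‖) := by
  have hZd : Differentiable ℝ Z := hZ.differentiable one_ne_zero
  set F : ℝ → ℝ := fun t => ⟪Z (a + t • u), u⟫ with hF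
  have hderiv : ∀ t : ℝ, HasDerivAt F (⟪fderiv ℝ Z (a + t • u) u, u⟫) t := by
    intro t
    have hγ : HasDerivAt (fun t : ℝ => a + t • u) u t := by
      simpa using ((hasDerivAt_id t).smul_const u).const_add a
    have hc := (hZd (a + t • u)).hasFDerivAt.comp_hasDerivAt t hγ
    have := hc.inner ℝ (hasDerivAt_const t u)
    simpa using this
  have hcont : Continuous fun t : ℝ => ⟪fderiv ℝ Z (a + t • u) u, u⟫ := by
    have h1 : Continuous (fderiv ℝ Z) := hZ.continuous_fderiv one_ne_zero
    have h2 : Continuous fun t : ℝ => a + t • u := by continuity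
    exact ((h1.comp h2).clm_apply continuous_const).inner continuous_const
  have hint : IntervalIntegrable (fun t : ℝ => ⟪fderiv ℝ Z (a + t • u) u, u⟫)
      MeasureTheory.volume 0 1 := hcont.intervalIntegrable 0 1
  have hFTC : F 1 - F 0 = ∫ t in (0:ℝ)..1, ⟪fderiv ℝ Z (a + t • u) u, u⟫ := by
    rw [intervalIntegral.integral_eq_sub_of_hasDerivAt (fun t _ => hderiv t) hint]
  have hbound : ∀ t ∈ Set.uIoc (0:ℝ) 1,
      ‖⟪fderiv ℝ Z (a + t • u) u, u⟫‖ ≤ C₀ * m ^ (-δ) * (‖u‖ * ‖u‖) := by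
    intro t ht
    rw [Set.uIoc_of_le (by norm_num : (0:ℝ) ≤ 1)] at ht
    have htIcc : t ∈ Set.Icc (0:ℝ) 1 := ⟨ht.1.le, ht.2⟩
    have hmn : m ≤ ‖a + t • u‖ := hseg t htIcc
    have h2n : 2 ≤ ‖a + t • u‖ := le_trans hm hmn
    have heq : ⟪fderiv ℝ Z (a + t • u) u, u⟫ = dsZ Z (a + t • u) u u := by
      rw [dsZ]; ring
    rw [Real.norm_eq_abs, heq]
    calc |dsZ Z (a + t • u) u u| ≤ C₀ * ‖a + t • u‖ ^ (-δ) * ‖u‖ * ‖u‖ :=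
          hC _ h2n u u
      _ ≤ C₀ * m ^ (-δ) * ‖u‖ * ‖u‖ := by
          gcongr C₀ * ?_ * ‖u‖ * ‖u‖
          exact rp_mono hδ0 (by linarith : (0:ℝ) < m) hmn
      _ = C₀ * m ^ (-δ) * (‖u‖ * ‖u‖) := by ring
  have := intervalIntegral.norm_integral_le_of_norm_le_const hbound
  rw [← hFTC] at this
  simp only [Real.norm_eq_abs] at this
  have hF1 : F 1 = ⟪Z (a + u), u⟫ := by rw [hF]; simp
  have hF0 : F 0 = ⟪Z a, u⟫ := by rw [hF]; simp
  rw [hF1, hF0] at this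
  rw [inner_sub_left]
  calc |⟪Z (a+u), u⟫ - ⟪Z a, u⟫| ≤ C₀ * m ^ (-δ) * (‖u‖ * ‖u‖) * |1 - 0| := this
    _ = C₀ * m ^ (-δ) * (‖u‖ * ‖u‖) := by norm_num

end PartC2
section PartC3

variable {Z : E3 → E3} {δ C₀ : ℝ}

/-- first difference of Z paired with a test vector -/
def ccf (Z : E3 → E3) (x v w : E3) : ℝ := ⟪Z (x + v) - Z x, w⟫

/-- antisymmetric part -/
def alf (Z : E3 → E3) (x v w : E3) : ℝ := (ccf Z x v w - ccf Z x w v) / 2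

lemma norm_lb (x u : E3) {c : ℝ} (hu : ‖u‖ ≤ 1) (hx : c + 1 ≤ ‖x‖) :
    c ≤ ‖x + u‖ := by
  have h : ‖x‖ ≤ ‖x + u‖ + ‖u‖ := by
    calc ‖x‖ = ‖(x + u) + (-u)‖ := by congr 1; abel
      _ ≤ ‖x + u‖ + ‖-u‖ := norm_add_le _ _
      _ = ‖x + u‖ + ‖u‖ := by rw [norm_neg]
  linarith

lemma sigma_bound (hZ : ContDiff ℝ 1 Z) (hδ0 : 0 < δ) (hC0 : 0 ≤ C₀)
    (hC : ∀ x : E3, 2 ≤ ‖x‖ → ∀ v w : E3, |dsZ Z x v w| ≤ C₀ * ‖x‖ ^ (-δ) * ‖v‖ * ‖w‖)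
    (x v w : E3) (m : ℝ) (hm : 2 ≤ m) (hv : ‖v‖ ≤ 1) (hw : ‖w‖ ≤ 1)
    (hx : m + 1 ≤ ‖x‖) :
    |ccf Z x v w + ccf Z x w v| ≤ 6 * (C₀ * m ^ (-δ)) := by
  have hmpos : (0:ℝ) < m := by linarith
  have htv : ∀ u : E3, ‖u‖ ≤ 1 → ∀ t ∈ Set.Icc (0:ℝ) 1, m ≤ ‖x + t • u‖ := by
    intro u hu t ht
    apply norm_lb x (t • u) _ hx
    rw [norm_smul, Real.norm_eq_abs, abs_of_nonneg ht.1]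
    nlinarith [ht.2, norm_nonneg u]
  have h1 := seg_bound hZ hδ0 hC0 hC x v m hm (htv v hv)
  have h2 := seg_bound hZ hδ0 hC0 hC x w m hm (htv w hw)
  have hseg3 : ∀ t ∈ Set.Icc (0:ℝ) 1, m ≤ ‖(x + v) + t • (w - v)‖ := by
    intro t ht
    have hco : (x + v) + t • (w - v) = x + ((1 - t) • v + t • w) := by
      rw [smul_sub, sub_smul, one_smul]; abel
    rw [hco]
    apply norm_lb x _ _ hx
    calc ‖(1-t) • v + t • w‖ ≤ ‖(1-t) • v‖ + ‖t • w‖ := norm_add_le _ _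
      _ = (1-t) * ‖v‖ + t * ‖w‖ := by
          rw [norm_smul, norm_smul, Real.norm_eq_abs, Real.norm_eq_abs,
            abs_of_nonneg (by linarith [ht.2] : (0:ℝ) ≤ 1 - t),
            abs_of_nonneg ht.1]
      _ ≤ 1 := by nlinarith [ht.1, ht.2, norm_nonneg v, norm_nonneg w]
  have h3 := seg_bound hZ hδ0 hC0 hC (x + v) (w - v) m hm hseg3
  rw [show (x + v) + (w - v) = x + w by abel] at h3
  have hid : ccf Z x v w + ccf Z x w v
      = ⟪Z (x+v) - Z x, v⟫ + ⟪Z (x+w) - Z x, w⟫ - ⟪Z (x+w) - Z (x+v), w - v⟫ := by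
    simp only [ccf, inner_sub_left, inner_sub_right]
    ring
  have hwv : ‖w - v‖ * ‖w - v‖ ≤ 4 := by
    have : ‖w - v‖ ≤ 2 := by
      calc ‖w - v‖ ≤ ‖w‖ + ‖v‖ := norm_sub_le _ _
        _ ≤ 2 := by linarith
    nlinarith [norm_nonneg (w - v)]
  have hrp : (0:ℝ) ≤ C₀ * m ^ (-δ) := by positivity
  have hb1 : |⟪Z (x+v) - Z x, v⟫| ≤ C₀ * m ^ (-δ) := by
    calc |⟪Z (x+v) - Z x, v⟫| ≤ C₀ * m ^ (-δ) * (‖v‖ * ‖v‖) := h1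
      _ ≤ C₀ * m ^ (-δ) * 1 := mul_le_mul_of_nonneg_left
          (by nlinarith [norm_nonneg v]) hrp
      _ = C₀ * m ^ (-δ) := by ring
  have hb2 : |⟪Z (x+w) - Z x, w⟫| ≤ C₀ * m ^ (-δ) := by
    calc |⟪Z (x+w) - Z x, w⟫| ≤ C₀ * m ^ (-δ) * (‖w‖ * ‖w‖) := h2
      _ ≤ C₀ * m ^ (-δ) * 1 := mul_le_mul_of_nonneg_left
          (by nlinarith [norm_nonneg w]) hrp
      _ = C₀ * m ^ (-δ) := by ring
  have hb3 : |⟪Z (x+w) - Z (x+v), w - v⟫| ≤ 4 * (C₀ * m ^ (-δ)) := by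
    calc |⟪Z (x+w) - Z (x+v), w - v⟫| ≤ C₀ * m ^ (-δ) * (‖w-v‖ * ‖w-v‖) := h3
      _ ≤ C₀ * m ^ (-δ) * 4 := mul_le_mul_of_nonneg_left hwv hrp
      _ = 4 * (C₀ * m ^ (-δ)) := by ring
  rw [hid]
  calc |⟪Z (x+v) - Z x, v⟫ + ⟪Z (x+w) - Z x, w⟫ - ⟪Z (x+w) - Z (x+v), w - v⟫|
      ≤ |⟪Z (x+v) - Z x, v⟫| + |⟪Z (x+w) - Z x, w⟫| + |⟪Z (x+w) - Z (x+v), w - v⟫| := by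
        exact (abs_sub _ _).trans (by gcongr; exact abs_add_le _ _)
    _ ≤ 6 * (C₀ * m ^ (-δ)) := by linarith

lemma E_id (Z : E3 → E3) (x h v w : E3) :
    ccf Z (x + h) v w - ccf Z x v w = ccf Z (x + v) h w - ccf Z x h w := by
  simp only [ccf, inner_sub_left]
  rw [show x + h + v = x + v + h by abel]
  ring

lemma alpha_var (hZ : ContDiff ℝ 1 Z) (hδ0 : 0 < δ) (hC0 : 0 ≤ C₀)
    (hC : ∀ x : E3, 2 ≤ ‖x‖ → ∀ v w : E3, |dsZ Z x v w| ≤ C₀ * ‖x‖ ^ (-δ) * ‖v‖ * ‖w‖)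
    (x h v w : E3) (m : ℝ) (hm : 2 ≤ m) (hh : ‖h‖ ≤ 1) (hv : ‖v‖ ≤ 1) (hw : ‖w‖ ≤ 1)
    (hx : m + 2 ≤ ‖x‖) :
    |alf Z (x + h) v w - alf Z x v w| ≤ 12 * (C₀ * m ^ (-δ)) := by
  have key : alf Z (x + h) v w - alf Z x v w
      = ((ccf Z (x+v) h w + ccf Z (x+v) w h) - (ccf Z x h w + ccf Z x w h)) / 2
        - ((ccf Z (x+w) h v + ccf Z (x+w) v h) - (ccf Z x h v + ccf Z x v h)) / 2 := by
    have e1 := E_id Z x h v w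
    have e2 := E_id Z x h w v
    have e3 := E_id Z x v w h
    simp only [alf] at *
    linarith
  have hxv : m + 1 ≤ ‖x + v‖ := norm_lb x v hv (by linarith)
  have hxw : m + 1 ≤ ‖x + w‖ := norm_lb x w hw (by linarith)
  have s1 := sigma_bound hZ hδ0 hC0 hC (x+v) h w m hm hh hw hxv
  have s2 := sigma_bound hZ hδ0 hC0 hC x h w m hm hh hw (by linarith)
  have s3 := sigma_bound hZ hδ0 hC0 hC (x+w) h v m hm hh hv hxw
  have s4 := sigma_bound hZ hδ0 hC0 hC x h v m hm hh hv (by linarith)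
  rw [key]
  have a1 := abs_le.1 s1
  have a2 := abs_le.1 s2
  have a3 := abs_le.1 s3
  have a4 := abs_le.1 s4
  rw [abs_le]
  constructor <;> · simp only [ccf] at *; linarith

end PartC3
section PartC4

variable {Z : E3 → E3} {δ C₀ : ℝ}

lemma norm_le_sum_coord (y : E3) :
    ‖y‖ ≤ ∑ j : Fin 3, |⟪y, EuclideanSpace.single j (1:ℝ)⟫| := by
  have hco : ∀ j : Fin 3, ⟪y, EuclideanSpace.single j (1:ℝ)⟫ = y j := by
    intro j
    rw [EuclideanSpace.inner_single_right]
    simp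
  have h1 : ∑ j : Fin 3, |⟪y, EuclideanSpace.single j (1:ℝ)⟫| = ∑ j : Fin 3, ‖y j‖ := by
    apply Finset.sum_congr rfl
    intro j _
    rw [hco j, Real.norm_eq_abs]
  rw [h1, EuclideanSpace.norm_eq]
  have hs : ∀ i : Fin 3, ‖y i‖^2 ≤ ‖y i‖ * ∑ j : Fin 3, ‖y j‖ := by
    intro i
    have hle : ‖y i‖ ≤ ∑ j : Fin 3, ‖y j‖ :=
      Finset.single_le_sum (fun j _ => norm_nonneg (y j)) (Finset.mem_univ i)
    nlinarith [norm_nonneg (y i)]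
  have h2 : ∑ i : Fin 3, ‖y i‖^2 ≤ (∑ j : Fin 3, ‖y j‖)^2 := by
    calc ∑ i : Fin 3, ‖y i‖^2 ≤ ∑ i : Fin 3, ‖y i‖ * ∑ j : Fin 3, ‖y j‖ :=
          Finset.sum_le_sum (fun i _ => hs i)
      _ = (∑ j : Fin 3, ‖y j‖)^2 := by rw [← Finset.sum_mul]; ring
  calc Real.sqrt (∑ i : Fin 3, ‖y i‖^2) ≤ Real.sqrt ((∑ j : Fin 3, ‖y j‖)^2) :=
        Real.sqrt_le_sqrt h2
    _ = ∑ j : Fin 3, ‖y j‖ :=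
        Real.sqrt_sq (Finset.sum_nonneg fun j _ => norm_nonneg (y j))

set_option maxHeartbeats 2000000 in
lemma part_c_main (hZ : ContDiff ℝ 1 Z) (hδ0 : 0 < δ) (hδ1 : δ < 1) (hC0 : 0 ≤ C₀)
    (hC : ∀ x : E3, 2 ≤ ‖x‖ → ∀ v w : E3, |dsZ Z x v w| ≤ C₀ * ‖x‖ ^ (-δ) * ‖v‖ * ‖w‖)
    (K : ℝ) (hK0 : 0 ≤ K) (hK : ∀ y : E3, ‖y‖ ≤ 6 → ‖Z y‖ ≤ K)
    (x : E3) (hr5 : 5 < ‖x‖) :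
    ‖Z x‖ ≤ (7*K + 9*C₀ + 72*C₀/(1-δ)) * ‖x‖ ^ (2 - δ) := by
  set r := ‖x‖ with hrdef
  have hr0 : (0:ℝ) < r := by linarith
  have hx0 : x ≠ 0 := by
    intro h; rw [hrdef] at hr0; rw [h] at hr0; simp at hr0
  set ω : E3 := r⁻¹ • x with hω
  have hωn : ‖ω‖ = 1 := by
    rw [hω, norm_smul, Real.norm_eq_abs, abs_of_pos (inv_pos.2 hr0)]
    field_simp
    exact hrdef.symm
  set n : ℕ := ⌈r - 4⌉₊ with hn
  have hr4 : (1:ℝ) < r - 4 := by linarith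
  have hn1 : 1 ≤ n := Nat.one_le_ceil_iff.2 (by linarith)
  have hnn : (0:ℝ) < (n:ℝ) := by exact_mod_cast Nat.pos_of_ne_zero (by omega)
  have hn_ub : (n:ℝ) < r - 3 := by
    have := Nat.ceil_lt_add_one (by linarith : (0:ℝ) ≤ r - 4)
    rw [← hn] at this
    linarith
  have hn_lb : r - 4 ≤ (n:ℝ) := Nat.le_ceil _
  have hnr : (n:ℝ) ≤ r := by linarith
  set s : ℝ := (r - 4) / (n:ℝ) with hs
  have hs0 : 0 < s := by positivity
  have hs1 : s ≤ 1 := by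
    rw [hs, div_le_one hnn]; linarith
  have hs_half : 1/2 ≤ s := by
    rw [hs, le_div_iff₀ hnn]
    linarith
  set p : ℕ → E3 := fun k => (4 + k * s) • ω with hp
  have hks0 : ∀ k : ℕ, (0:ℝ) ≤ (k:ℝ) * s := fun k => by positivity
  have hpnorm : ∀ k : ℕ, ‖p k‖ = 4 + k * s := by
    intro k
    rw [hp]
    simp only []
    rw [norm_smul, Real.norm_eq_abs, hωn, mul_one,
      abs_of_nonneg (by linarith [hks0 k] : (0:ℝ) ≤ 4 + k * s)]
  have hpn : p n = x := by
    rw [hp]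
    simp only []
    have hns : (n:ℝ) * s = r - 4 := by
      rw [hs]; field_simp
    rw [hns]
    have : (4 + (r - 4)) = r := by ring
    rw [this, hω, smul_smul]
    rw [mul_inv_cancel₀ (ne_of_gt hr0), one_smul]
  have hstep : ∀ k : ℕ, p (k+1) = p k + s • ω := by
    intro k
    rw [hp]
    simp only []
    rw [← add_smul]
    congr 1
    push_cast
    ring
  set e : Fin 3 → E3 := fun j => EuclideanSpace.single j (1:ℝ) with he
  have hen : ∀ j, ‖e j‖ = 1 := by
    intro j; rw [he]; simp
  have hsωn : ‖s • ω‖ ≤ 1 := by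
    rw [norm_smul, Real.norm_eq_abs, abs_of_pos hs0, hωn]; linarith
  -- decay comparison
  have hdec : ∀ k : ℕ, (2 + (k:ℝ) * s) ^ (-δ) ≤ 2 * ((k:ℝ) + 1) ^ (-δ) := by
    intro k
    have hk1 : (0:ℝ) < ((k:ℝ)+1)/2 := by positivity
    have h1 : ((k:ℝ)+1)/2 ≤ 2 + (k:ℝ) * s := by
      have : (k:ℝ) * (1/2) ≤ (k:ℝ) * s :=
        mul_le_mul_of_nonneg_left hs_half (Nat.cast_nonneg k)
      linarith
    calc (2 + (k:ℝ) * s) ^ (-δ) ≤ (((k:ℝ)+1)/2) ^ (-δ) := rp_mono hδ0 hk1 h1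
      _ ≤ 2 * ((k:ℝ)+1) ^ (-δ) := rp_half hδ0 hδ1 (by positivity)
  -- the alpha sequence
  set α : ℕ → Fin 3 → ℝ := fun k j => alf Z (p k) (s • ω) (e j) with hα
  have hinc : ∀ k : ℕ, ∀ j, |α (k+1) j - α k j| ≤ 24 * (C₀ * ((k:ℝ)+1) ^ (-δ)) := by
    intro k j
    have hm2 : 2 ≤ 2 + (k:ℝ) * s := by linarith [hks0 k]
    have hxk : (2 + (k:ℝ)*s) + 2 ≤ ‖p k‖ := by rw [hpnorm k]; linarith
    have hav := alpha_var hZ hδ0 hC0 hC (p k) (s • ω) (s • ω) (e j)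
      (2 + (k:ℝ)*s) hm2 hsωn hsωn (by rw [hen j]) hxk
    rw [← hstep k] at hav
    calc |α (k+1) j - α k j| ≤ 12 * (C₀ * (2 + (k:ℝ)*s) ^ (-δ)) := hav
      _ ≤ 12 * (C₀ * (2 * ((k:ℝ)+1) ^ (-δ))) := by
          apply mul_le_mul_of_nonneg_left _ (by norm_num : (0:ℝ) ≤ 12)
          exact mul_le_mul_of_nonneg_left (hdec k) hC0
      _ = 24 * (C₀ * ((k:ℝ)+1) ^ (-δ)) := by ring
  have hbase : ∀ j, |α 0 j| ≤ 2 * K := by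
    intro j
    have hp0 : ‖p 0‖ = 4 := by rw [hpnorm 0]; simp
    have hZp0 : ‖Z (p 0)‖ ≤ K := hK _ (by rw [hp0]; norm_num)
    have h1 : ‖p 0 + s • ω‖ ≤ 6 := by
      calc ‖p 0 + s • ω‖ ≤ ‖p 0‖ + ‖s • ω‖ := norm_add_le _ _
        _ ≤ 6 := by rw [hp0]; linarith
    have h2 : ‖p 0 + e j‖ ≤ 6 := by
      calc ‖p 0 + e j‖ ≤ ‖p 0‖ + ‖e j‖ := norm_add_le _ _
        _ ≤ 6 := by rw [hp0, hen j]; norm_num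
    have hb1 : |ccf Z (p 0) (s • ω) (e j)| ≤ 2 * K := by
      rw [ccf]
      calc |⟪Z (p 0 + s • ω) - Z (p 0), e j⟫|
          ≤ ‖Z (p 0 + s • ω) - Z (p 0)‖ * ‖e j‖ := abs_real_inner_le_norm _ _
        _ ≤ (‖Z (p 0 + s • ω)‖ + ‖Z (p 0)‖) * 1 := by
            rw [hen j]
            exact mul_le_mul_of_nonneg_right (norm_sub_le _ _) (by norm_num)
        _ ≤ 2 * K := by
            have := hK _ h1
            nlinarith
    have hb2 : |ccf Z (p 0) (e j) (s • ω)| ≤ 2 * K := by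
      rw [ccf]
      calc |⟪Z (p 0 + e j) - Z (p 0), s • ω⟫|
          ≤ ‖Z (p 0 + e j) - Z (p 0)‖ * ‖s • ω‖ := abs_real_inner_le_norm _ _
        _ ≤ (‖Z (p 0 + e j)‖ + ‖Z (p 0)‖) * 1 := by
            apply mul_le_mul (norm_sub_le _ _) hsωn (norm_nonneg _)
            positivity
        _ ≤ 2 * K := by
            have := hK _ h2
            nlinarith
    rw [hα]
    simp only [alf]
    rw [abs_div]
    rw [abs_of_nonneg (by norm_num : (0:ℝ) ≤ 2)]
    have := abs_sub (ccf Z (p 0) (s • ω) (e j)) (ccf Z (p 0) (e j) (s • ω))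
    linarith [abs_sub_abs_le_abs_sub (ccf Z (p 0) (s • ω) (e j)) (ccf Z (p 0) (e j) (s • ω)),
      abs_sub (ccf Z (p 0) (s • ω) (e j)) (ccf Z (p 0) (e j) (s • ω))]
  -- cumulative alpha bound
  have hsum : ∀ k : ℕ, k ≤ n → ∀ j, |α k j - α 0 j|
      ≤ 24 * C₀ * ∑ i ∈ Finset.range k, ((i:ℝ)+1) ^ (-δ) := by
    intro k hk j
    induction k with
    | zero => simp
    | succ k ih =>
      have hk' : k ≤ n := Nat.le_of_succ_le hk
      have h1 := hinc k j
      have h2 := ih hk'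
      rw [Finset.sum_range_succ]
      calc |α (k+1) j - α 0 j|
          ≤ |α (k+1) j - α k j| + |α k j - α 0 j| := by
            have := abs_add_le (α (k+1) j - α k j) (α k j - α 0 j)
            simpa [sub_add_sub_cancel] using this
        _ ≤ 24 * (C₀ * ((k:ℝ)+1) ^ (-δ))
            + 24 * C₀ * ∑ i ∈ Finset.range k, ((i:ℝ)+1) ^ (-δ) := add_le_add h1 h2
        _ = 24 * C₀ * ((∑ i ∈ Finset.range k, ((i:ℝ)+1) ^ (-δ)) + ((k:ℝ)+1) ^ (-δ)) := by
            ring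
  have hδδ : (0:ℝ) < 1 - δ := by linarith
  have hsum_n : ∑ i ∈ Finset.range n, ((i:ℝ)+1) ^ (-δ) ≤ (n:ℝ) ^ (1-δ) / (1-δ) :=
    sum_rpow_bound hδ0 hδ1 n
  have hαb : ∀ k : ℕ, k ≤ n → ∀ j, |α k j| ≤ 2*K + 24*C₀*((n:ℝ) ^ (1-δ) / (1-δ)) := by
    intro k hk j
    have h1 := hsum k hk j
    have h2 : ∑ i ∈ Finset.range k, ((i:ℝ)+1) ^ (-δ)
        ≤ ∑ i ∈ Finset.range n, ((i:ℝ)+1) ^ (-δ) := by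
      apply Finset.sum_le_sum_of_subset_of_nonneg
      · exact Finset.range_subset_range.2 hk
      · intro i _ _
        positivity
    have h3 : |α k j| ≤ |α 0 j| + |α k j - α 0 j| := by
      have := abs_add_le (α 0 j) (α k j - α 0 j)
      simpa using this
    have h4 : 24 * C₀ * ∑ i ∈ Finset.range k, ((i:ℝ)+1) ^ (-δ)
        ≤ 24 * C₀ * ((n:ℝ) ^ (1-δ) / (1-δ)) := by
      apply mul_le_mul_of_nonneg_left _ (by positivity)
      exact le_trans h2 hsum_n
    linarith [hbase j]
  -- telescope
  have htel : ∀ j, ∀ k : ℕ, ∑ i ∈ Finset.range k, ccf Z (p i) (s • ω) (e j)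
      = ⟪Z (p k) - Z (p 0), e j⟫ := by
    intro j k
    induction k with
    | zero => simp
    | succ k ih =>
      rw [Finset.sum_range_succ, ih]
      have : ccf Z (p k) (s • ω) (e j) = ⟪Z (p (k+1)) - Z (p k), e j⟫ := by
        rw [ccf, ← hstep k]
      rw [this, inner_sub_left, inner_sub_left, inner_sub_left]
      ring
  -- bound on each cc term
  set B : ℝ := 2*K + 24*C₀*((n:ℝ) ^ (1-δ) / (1-δ)) + 3*C₀ with hB
  have hcc : ∀ k : ℕ, k < n → ∀ j, |ccf Z (p k) (s • ω) (e j)| ≤ B := by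
    intro k hk j
    have hm2 : 2 ≤ 2 + (k:ℝ) * s := by linarith [hks0 k]
    have hxk : (2 + (k:ℝ)*s) + 1 ≤ ‖p k‖ := by rw [hpnorm k]; linarith
    have hσ := sigma_bound hZ hδ0 hC0 hC (p k) (s • ω) (e j)
      (2 + (k:ℝ)*s) hm2 hsωn (by rw [hen j]) hxk
    have hrp1 : (2 + (k:ℝ)*s) ^ (-δ) ≤ 1 := by
      calc (2 + (k:ℝ)*s) ^ (-δ) ≤ (1:ℝ) ^ (-δ) :=
            rp_mono hδ0 one_pos (by linarith [hks0 k])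
        _ = 1 := Real.one_rpow _
    have hσ' : |ccf Z (p k) (s • ω) (e j) + ccf Z (p k) (e j) (s • ω)| ≤ 6 * C₀ := by
      calc |ccf Z (p k) (s • ω) (e j) + ccf Z (p k) (e j) (s • ω)|
          ≤ 6 * (C₀ * (2 + (k:ℝ)*s) ^ (-δ)) := hσ
        _ ≤ 6 * (C₀ * 1) := by
            apply mul_le_mul_of_nonneg_left _ (by norm_num : (0:ℝ) ≤ 6)
            exact mul_le_mul_of_nonneg_left hrp1 hC0
        _ = 6 * C₀ := by ring
    have hdecomp : ccf Z (p k) (s • ω) (e j) = α k j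
        + (ccf Z (p k) (s • ω) (e j) + ccf Z (p k) (e j) (s • ω)) / 2 := by
      rw [hα]; simp only [alf]; ring
    have hαk := hαb k (le_of_lt hk) j
    rw [hdecomp, hB]
    have h5 := abs_add_le (α k j)
      ((ccf Z (p k) (s • ω) (e j) + ccf Z (p k) (e j) (s • ω)) / 2)
    have h6 : |(ccf Z (p k) (s • ω) (e j) + ccf Z (p k) (e j) (s • ω)) / 2|
        = |ccf Z (p k) (s • ω) (e j) + ccf Z (p k) (e j) (s • ω)| / 2 := by
      rw [abs_div]
      norm_num
    rw [h6] at h5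
    linarith
  -- component bound
  have hcomp : ∀ j, |⟪Z x - Z (p 0), e j⟫| ≤ (n:ℝ) * B := by
    intro j
    rw [← hpn, ← htel j n]
    calc |∑ i ∈ Finset.range n, ccf Z (p i) (s • ω) (e j)|
        ≤ ∑ i ∈ Finset.range n, |ccf Z (p i) (s • ω) (e j)| :=
          Finset.abs_sum_le_sum_abs _ _
      _ ≤ ∑ _i ∈ Finset.range n, B :=
          Finset.sum_le_sum (fun i hi => hcc i (Finset.mem_range.1 hi) j)
      _ = (n:ℝ) * B := by
          rw [Finset.sum_const, Finset.card_range, nsmul_eq_mul]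
  -- assemble
  have hdiff : ‖Z x - Z (p 0)‖ ≤ 3 * ((n:ℝ) * B) := by
    calc ‖Z x - Z (p 0)‖ ≤ ∑ j : Fin 3, |⟪Z x - Z (p 0), EuclideanSpace.single j (1:ℝ)⟫| :=
          norm_le_sum_coord _
      _ ≤ ∑ _j : Fin 3, (n:ℝ) * B := Finset.sum_le_sum (fun j _ => hcomp j)
      _ = 3 * ((n:ℝ) * B) := by
          rw [Finset.sum_const]
          simp
  have hZp0 : ‖Z (p 0)‖ ≤ K := by
    apply hK
    rw [hpnorm 0]
    norm_num
  have hZx : ‖Z x‖ ≤ K + 3 * ((n:ℝ) * B) := by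
    calc ‖Z x‖ = ‖Z (p 0) + (Z x - Z (p 0))‖ := by congr 1; abel
      _ ≤ ‖Z (p 0)‖ + ‖Z x - Z (p 0)‖ := norm_add_le _ _
      _ ≤ K + 3 * ((n:ℝ) * B) := add_le_add hZp0 hdiff
  -- rpow comparisons
  have hr1 : (1:ℝ) ≤ r := by linarith
  have h2δ1 : (1:ℝ) ≤ 2 - δ := by linarith
  have hrp_r : r ≤ r ^ (2-δ) := by
    calc r = r ^ (1:ℝ) := (Real.rpow_one r).symm
      _ ≤ r ^ (2-δ) := Real.rpow_le_rpow_of_exponent_le hr1 h2δ1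
  have hrp_1 : (1:ℝ) ≤ r ^ (2-δ) := by
    calc (1:ℝ) = r ^ (0:ℝ) := (Real.rpow_zero r).symm
      _ ≤ r ^ (2-δ) := Real.rpow_le_rpow_of_exponent_le hr1 (by linarith)
  have hn_pow : (n:ℝ) * (n:ℝ) ^ (1-δ) = (n:ℝ) ^ (2-δ) := by
    rw [show (n:ℝ) * (n:ℝ) ^ (1-δ) = (n:ℝ) ^ (1:ℝ) * (n:ℝ) ^ (1-δ) by
      rw [Real.rpow_one]]
    rw [← Real.rpow_add hnn, show (1:ℝ) + (1-δ) = 2 - δ by ring]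
  have hn_pow_le : (n:ℝ) ^ (2-δ) ≤ r ^ (2-δ) :=
    Real.rpow_le_rpow (le_of_lt hnn) hnr (by linarith)
  have hnB : 3 * ((n:ℝ) * B) ≤ (6*K + 9*C₀) * r ^ (2-δ) + 72*C₀/(1-δ) * r ^ (2-δ) := by
    rw [hB]
    have hexp : 3 * ((n:ℝ) * (2*K + 24*C₀*((n:ℝ) ^ (1-δ) / (1-δ)) + 3*C₀))
        = (6*K + 9*C₀) * (n:ℝ) + 72*C₀/(1-δ) * ((n:ℝ) * (n:ℝ) ^ (1-δ)) := by
      field_simp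
      ring
    rw [hexp, hn_pow]
    have hnr2 : (n:ℝ) ≤ r ^ (2-δ) := le_trans hnr hrp_r
    have t1 : (6*K + 9*C₀) * (n:ℝ) ≤ (6*K + 9*C₀) * r ^ (2-δ) :=
      mul_le_mul_of_nonneg_left hnr2 (by positivity)
    have t2 : 72*C₀/(1-δ) * (n:ℝ) ^ (2-δ) ≤ 72*C₀/(1-δ) * r ^ (2-δ) :=
      mul_le_mul_of_nonneg_left hn_pow_le (by positivity)
    linarith
  have hKr : K ≤ K * r ^ (2-δ) := by
    calc K = K * 1 := by ring
      _ ≤ K * r ^ (2-δ) := mul_le_mul_of_nonneg_left hrp_1 hK0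
  calc ‖Z x‖ ≤ K + 3 * ((n:ℝ) * B) := hZx
    _ ≤ K * r ^ (2-δ) + ((6*K + 9*C₀) * r ^ (2-δ) + 72*C₀/(1-δ) * r ^ (2-δ)) := by
        linarith
    _ = (7*K + 9*C₀ + 72*C₀/(1-δ)) * r ^ (2-δ) := by ring


end PartC4

theorem stmt_10 (δ : ℝ) (hδ1 : 1 / 2 < δ) (hδ2 : δ < 1)
    (Z : E3 → E3) (hZ : ContDiff ℝ 1 Z)
    (hdecay : ∃ C : ℝ, ∀ x : E3, 2 ≤ ‖x‖ → ∀ v w : E3,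
      |dsZ Z x v w| ≤ C * ‖x‖ ^ (-δ) * ‖v‖ * ‖w‖) :
    (∀ x : E3, x ≠ 0 →
      fderiv ℝ (fun y => ⟪Z y, Nr y⟫) x (Nr x) = dsZ Z x (Nr x) (Nr x)) ∧
    (∀ x : E3, 2 ≤ ‖x‖ → ∀ ZT : E3,
      ZT = Z x - ⟪Z x, Nr x⟫ • Nr x → ZT ≠ 0 →
      fderiv ℝ (fun y => ‖Z y - ⟪Z y, Nr y⟫ • Nr y‖) x (Nr x) - ‖ZT‖ * (1 / ‖x‖)
        = 2 * dsZ Z x (Nr x) (‖ZT‖⁻¹ • ZT)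
          - fderiv ℝ (fun y => ⟪Z y, Nr y⟫) x (‖ZT‖⁻¹ • ZT)) ∧
    (∃ C' : ℝ, ∀ x : E3, 2 ≤ ‖x‖ → ‖Z x‖ ≤ C' * ‖x‖ ^ (2 - δ)) := by
  refine ⟨fun x hx => part_a hZ hx,
    fun x hr ZT hZT hZT0 => part_b hZ hr ZT hZT hZT0, ?_⟩
  have hδ0 : 0 < δ := by linarith
  obtain ⟨C, hC⟩ := hdecay
  set C₀ : ℝ := |C| with hC₀
  have hC0 : 0 ≤ C₀ := abs_nonneg C
  have hC' : ∀ x : E3, 2 ≤ ‖x‖ → ∀ v w : E3,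
      |dsZ Z x v w| ≤ C₀ * ‖x‖ ^ (-δ) * ‖v‖ * ‖w‖ := by
    intro x hx v w
    refine (hC x hx v w).trans ?_
    have hA : (0:ℝ) ≤ ‖x‖ ^ (-δ) := Real.rpow_nonneg (norm_nonneg x) _
    have h1 : C * ‖x‖ ^ (-δ) ≤ C₀ * ‖x‖ ^ (-δ) :=
      mul_le_mul_of_nonneg_right (le_abs_self C) hA
    have h2 := mul_le_mul_of_nonneg_right h1 (norm_nonneg v)
    exact mul_le_mul_of_nonneg_right h2 (norm_nonneg w)
  obtain ⟨K, hKb⟩ := (isCompact_closedBall (0:E3) 6).exists_bound_of_continuousOn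
    hZ.continuous.continuousOn
  have hK : ∀ y : E3, ‖y‖ ≤ 6 → ‖Z y‖ ≤ K := by
    intro y hy
    exact hKb y (by simpa [Metric.mem_closedBall, dist_zero_right] using hy)
  have hK0 : 0 ≤ K := le_trans (norm_nonneg (Z 0)) (hK 0 (by simp))
  refine ⟨7*K + 9*C₀ + 72*C₀/(1-δ), fun x hr => ?_⟩
  by_cases h5 : 5 < ‖x‖
  · exact part_c_main hZ hδ0 hδ2 hC0 hC' K hK0 hK x h5
  · push_neg at h5
    have hZxK : ‖Z x‖ ≤ K := hK x (by linarith)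
    have h1 : (1:ℝ) ≤ ‖x‖ ^ (2-δ) := by
      calc (1:ℝ) = ‖x‖ ^ (0:ℝ) := (Real.rpow_zero _).symm
        _ ≤ ‖x‖ ^ (2-δ) :=
          Real.rpow_le_rpow_of_exponent_le (by linarith) (by linarith)
    have hC'0 : (0:ℝ) ≤ 72*C₀/(1-δ) := by
      apply div_nonneg (by linarith) (by linarith)
    have h2 : K * 1 ≤ (7*K + 9*C₀ + 72*C₀/(1-δ)) * ‖x‖ ^ (2-δ) := by
      apply mul_le_mul (by linarith) h1 (by norm_num) (by linarith)
    linarith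

end
end
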